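/- Let C ≥ 1 and T ≥ 1 be reals, and let α > 0. The number of 6-tuples (q₁, q₂, c₁, c₂, g₁, g₂) of positive integers with q₁, q₂ ∈ [Q, 2Q], c₁, c₂ ∈ [C, 2C], c₁g₁, c₂g₂ ∈ [T, 2T] satisfying |c₁g₁q₁² − c₂g₂q₂²| ≤ M is at most O(T²·Q·(1 + M/(TQ))) where the implied constant is absolute, provided M ≥ 1. -/
import Mathlib

open Finset

lemma cardIcc_le (a b : ℕ) {x : ℝ} (hx : 0 ≤ x)
    (h : (b:ℝ) + 1 - a ≤ x) : ((Finset.Icc a b).card : ℝ) ≤ x := by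
  rcases le_or_gt a b with hab | hab
  · rw [Nat.card_Icc, Nat.cast_sub (by omega)]
    push_cast
    linarith
  · rw [Finset.Icc_eq_empty (by omega)]
    simpa using hx

noncomputable def pairBox (C T : ℝ) : Finset (ℕ × ℕ) :=
  (Finset.Icc ⌈C⌉₊ ⌊2*C⌋₊).biUnion
    (fun c => {c} ×ˢ Finset.Icc ⌈T/(c:ℝ)⌉₊ ⌊2*T/(c:ℝ)⌋₊)

lemma mem_pairBox {C T : ℝ} {c g : ℕ} (hc0 : 0 < c)
    (h1 : C ≤ (c:ℝ)) (h2 : (c:ℝ) ≤ 2*C) (h3 : T ≤ ((c*g : ℕ):ℝ)) (h4 : ((c*g : ℕ):ℝ) ≤ 2*T) :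
    (c, g) ∈ pairBox C T := by
  have hc0' : (0:ℝ) < c := by exact_mod_cast hc0
  refine Finset.mem_biUnion.2 ⟨c, ?_, ?_⟩
  · exact Finset.mem_Icc.2 ⟨Nat.ceil_le.2 h1, Nat.le_floor h2⟩
  · refine Finset.mem_product.2 ⟨Finset.mem_singleton_self c, Finset.mem_Icc.2 ⟨?_, ?_⟩⟩
    · refine Nat.ceil_le.2 ?_
      rw [div_le_iff₀ hc0']
      push_cast at h3 ⊢
      linarith
    · refine Nat.le_floor ?_
      rw [le_div_iff₀ hc0']
      push_cast at h4 ⊢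
      linarith

lemma card_pairBox_le {C T : ℝ} (hC : 1 ≤ C) (hT : 1 ≤ T) :
    ((pairBox C T).card : ℝ) ≤ 6 * T := by
  have hT0 : (0:ℝ) < T := by linarith
  have hC0 : (0:ℝ) < C := by linarith
  rcases le_or_gt C (2*T) with hCT | hCT
  · have step1 : ((pairBox C T).card : ℝ)
        ≤ ∑ c ∈ Finset.Icc ⌈C⌉₊ ⌊2*C⌋₊,
            ((({c} ×ˢ Finset.Icc ⌈T/(c:ℝ)⌉₊ ⌊2*T/(c:ℝ)⌋₊).card : ℕ) : ℝ) := by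
      rw [pairBox]
      exact_mod_cast Nat.cast_le.2 Finset.card_biUnion_le
    have step2 : ∀ c ∈ Finset.Icc ⌈C⌉₊ ⌊2*C⌋₊,
        ((({c} ×ˢ Finset.Icc ⌈T/(c:ℝ)⌉₊ ⌊2*T/(c:ℝ)⌋₊).card : ℕ) : ℝ) ≤ T/C + 1 := by
      intro c hc
      have hcC : C ≤ (c:ℝ) := le_trans (Nat.le_ceil C) (by exact_mod_cast (Finset.mem_Icc.1 hc).1)
      have hc0 : (0:ℝ) < c := lt_of_lt_of_le hC0 hcC
      rw [Finset.card_product, Finset.card_singleton, one_mul]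
      refine cardIcc_le _ _ (by positivity) ?_
      have f1 : (⌊2*T/(c:ℝ)⌋₊ : ℝ) ≤ 2*T/c := Nat.floor_le (by positivity)
      have f2 : T/(c:ℝ) ≤ ⌈T/(c:ℝ)⌉₊ := Nat.le_ceil _
      have f3 : T/(c:ℝ) ≤ T/C := by
        apply div_le_div_of_nonneg_left hT0.le hC0 hcC
      have f4 : 2*T/(c:ℝ) = 2*(T/(c:ℝ)) := by ring
      linarith
    have step3 : ((pairBox C T).card : ℝ) ≤ ((Finset.Icc ⌈C⌉₊ ⌊2*C⌋₊).card : ℝ) * (T/C + 1) := by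
      calc ((pairBox C T).card : ℝ) ≤ _ := step1
        _ ≤ ∑ _c ∈ Finset.Icc ⌈C⌉₊ ⌊2*C⌋₊, (T/C + 1) := Finset.sum_le_sum step2
        _ = _ := by rw [Finset.sum_const, nsmul_eq_mul]
    have step4 : ((Finset.Icc ⌈C⌉₊ ⌊2*C⌋₊).card : ℝ) ≤ C + 1 := by
      refine cardIcc_le _ _ (by positivity) ?_
      have f1 : (⌊2*C⌋₊ : ℝ) ≤ 2*C := Nat.floor_le (by positivity)
      have f2 : C ≤ (⌈C⌉₊ : ℝ) := Nat.le_ceil _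
      linarith
    have hTC : T/C ≤ T := div_le_self hT0.le hC
    have hTC0 : 0 ≤ T/C := by positivity
    calc ((pairBox C T).card : ℝ) ≤ ((Finset.Icc ⌈C⌉₊ ⌊2*C⌋₊).card : ℝ) * (T/C + 1) := step3
      _ ≤ (C+1) * (T/C + 1) := by
          apply mul_le_mul_of_nonneg_right step4 (by positivity)
      _ = C * (T/C) + C + T/C + 1 := by ring
      _ ≤ 6 * T := by
          have : C * (T/C) = T := by field_simp
          rw [this]
          linarith
  · have : pairBox C T = ∅ := by
      rw [pairBox]
      apply Finset.eq_empty_iff_forall_notMem.2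
      intro x hx
      obtain ⟨c, hc, hxc⟩ := Finset.mem_biUnion.1 hx
      have hcC : C ≤ (c:ℝ) := le_trans (Nat.le_ceil C) (by exact_mod_cast (Finset.mem_Icc.1 hc).1)
      have hc0 : (0:ℝ) < c := lt_of_lt_of_le hC0 hcC
      have hfloor : ⌊2*T/(c:ℝ)⌋₊ = 0 := by
        apply Nat.floor_eq_zero.2
        rw [div_lt_one hc0]
        linarith
      have hceil : 1 ≤ ⌈T/(c:ℝ)⌉₊ := by
        rw [Nat.one_le_ceil_iff]
        positivity
      rw [hfloor, Finset.Icc_eq_empty (by omega), Finset.product_empty] at hxc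
      exact absurd hxc (Finset.notMem_empty x)
    rw [this]
    simpa using by positivity

def cond6 (Q C T M : ℝ) (p : ℕ × ℕ × ℕ × ℕ × ℕ × ℕ) : Prop :=
  0 < p.1 ∧ 0 < p.2.1 ∧ 0 < p.2.2.1 ∧ 0 < p.2.2.2.1 ∧ 0 < p.2.2.2.2.1 ∧ 0 < p.2.2.2.2.2 ∧
  Q ≤ (p.1:ℝ) ∧ (p.1:ℝ) ≤ 2*Q ∧ Q ≤ (p.2.1:ℝ) ∧ (p.2.1:ℝ) ≤ 2*Q ∧
  C ≤ (p.2.2.1:ℝ) ∧ (p.2.2.1:ℝ) ≤ 2*C ∧ C ≤ (p.2.2.2.1:ℝ) ∧ (p.2.2.2.1:ℝ) ≤ 2*C ∧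
  T ≤ ((p.2.2.1 * p.2.2.2.2.1 : ℕ):ℝ) ∧ ((p.2.2.1 * p.2.2.2.2.1 : ℕ):ℝ) ≤ 2*T ∧
  T ≤ ((p.2.2.2.1 * p.2.2.2.2.2 : ℕ):ℝ) ∧ ((p.2.2.2.1 * p.2.2.2.2.2 : ℕ):ℝ) ≤ 2*T ∧
  (|(p.2.2.1 * p.2.2.2.2.1 * p.1^2 : ℤ) - (p.2.2.2.1 * p.2.2.2.2.2 * p.2.1^2 : ℤ)| : ℝ) ≤ M

set_option maxHeartbeats 1000000 in
/-- Counting 6-tuples `(q₁,q₂,c₁,c₂,g₁,g₂)` in dyadic boxes with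
`|c₁g₁q₁² − c₂g₂q₂²| ≤ M`: the count is `O(T²·Q·(1 + M/(TQ)))` with an absolute constant. -/
theorem stmt_4 : ∃ K > 0, ∀ (Q C T M : ℝ), 1 ≤ Q → 1 ≤ C → 1 ≤ T → 1 ≤ M →
    (Set.ncard {p : ℕ × ℕ × ℕ × ℕ × ℕ × ℕ |
        0 < p.1 ∧ 0 < p.2.1 ∧ 0 < p.2.2.1 ∧ 0 < p.2.2.2.1 ∧ 0 < p.2.2.2.2.1 ∧ 0 < p.2.2.2.2.2 ∧
        Q ≤ (p.1:ℝ) ∧ (p.1:ℝ) ≤ 2*Q ∧ Q ≤ (p.2.1:ℝ) ∧ (p.2.1:ℝ) ≤ 2*Q ∧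
        C ≤ (p.2.2.1:ℝ) ∧ (p.2.2.1:ℝ) ≤ 2*C ∧ C ≤ (p.2.2.2.1:ℝ) ∧ (p.2.2.2.1:ℝ) ≤ 2*C ∧
        T ≤ ((p.2.2.1 * p.2.2.2.2.1 : ℕ):ℝ) ∧ ((p.2.2.1 * p.2.2.2.2.1 : ℕ):ℝ) ≤ 2*T ∧
        T ≤ ((p.2.2.2.1 * p.2.2.2.2.2 : ℕ):ℝ) ∧ ((p.2.2.2.1 * p.2.2.2.2.2 : ℕ):ℝ) ≤ 2*T ∧
        (|(p.2.2.1 * p.2.2.2.2.1 * p.1^2 : ℤ) - (p.2.2.2.1 * p.2.2.2.2.2 * p.2.1^2 : ℤ)| : ℝ) ≤ M}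
      : ℝ)
      ≤ K * (T^2 * Q * (1 + M/(T*Q))) := by
  classical
  refine ⟨72, by norm_num, ?_⟩
  intro Q C T M hQ hC hT hM
  have hQ0 : (0:ℝ) < Q := by linarith
  have hT0 : (0:ℝ) < T := by linarith
  have hC0 : (0:ℝ) < C := by linarith
  have hM0 : (0:ℝ) < M := by linarith
  have hset : {p : ℕ × ℕ × ℕ × ℕ × ℕ × ℕ |
        0 < p.1 ∧ 0 < p.2.1 ∧ 0 < p.2.2.1 ∧ 0 < p.2.2.2.1 ∧ 0 < p.2.2.2.2.1 ∧ 0 < p.2.2.2.2.2 ∧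
        Q ≤ (p.1:ℝ) ∧ (p.1:ℝ) ≤ 2*Q ∧ Q ≤ (p.2.1:ℝ) ∧ (p.2.1:ℝ) ≤ 2*Q ∧
        C ≤ (p.2.2.1:ℝ) ∧ (p.2.2.1:ℝ) ≤ 2*C ∧ C ≤ (p.2.2.2.1:ℝ) ∧ (p.2.2.2.1:ℝ) ≤ 2*C ∧
        T ≤ ((p.2.2.1 * p.2.2.2.2.1 : ℕ):ℝ) ∧ ((p.2.2.1 * p.2.2.2.2.1 : ℕ):ℝ) ≤ 2*T ∧
        T ≤ ((p.2.2.2.1 * p.2.2.2.2.2 : ℕ):ℝ) ∧ ((p.2.2.2.1 * p.2.2.2.2.2 : ℕ):ℝ) ≤ 2*T ∧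
        (|(p.2.2.1 * p.2.2.2.2.1 * p.1^2 : ℤ) - (p.2.2.2.1 * p.2.2.2.2.2 * p.2.1^2 : ℤ)| : ℝ) ≤ M}
      = {p : ℕ × ℕ × ℕ × ℕ × ℕ × ℕ | cond6 Q C T M p} := rfl
  rw [hset]
  set D : ℕ := ⌊M/(T*Q)⌋₊ with hD
  set Bq : Finset ℕ := Finset.Icc ⌈Q⌉₊ ⌊2*Q⌋₊ with hBq
  set Bc : Finset ℕ := Finset.Icc ⌈C⌉₊ ⌊2*C⌋₊ with hBc
  set Bg : Finset ℕ := Finset.Icc 1 ⌊2*T⌋₊ with hBg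
  set F : Finset (ℕ×ℕ×ℕ×ℕ×ℕ×ℕ) :=
    (Bq ×ˢ Bq ×ˢ Bc ×ˢ Bc ×ˢ Bg ×ˢ Bg).filter (cond6 Q C T M) with hF
  -- Step 1: the set is contained in F
  have hsub : {p : ℕ × ℕ × ℕ × ℕ × ℕ × ℕ | cond6 Q C T M p} ⊆ (F : Set _) := by
    rintro ⟨q1, q2, c1, c2, g1, g2⟩ hp
    have hp2 := hp
    obtain ⟨h1, h2, h3, h4, h5, h6, h7, h8, h9, h10, h11, h12, h13, h14, h15, h16, h17, h18, h19⟩ :=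
      hp2
    have hg1 : g1 ≤ ⌊2*T⌋₊ :=
      le_trans (Nat.le_mul_of_pos_left g1 h3) (Nat.le_floor h16)
    have hg2 : g2 ≤ ⌊2*T⌋₊ :=
      le_trans (Nat.le_mul_of_pos_left g2 h4) (Nat.le_floor h18)
    simp only [Finset.coe_filter, Set.mem_setOf_eq, hF]
    refine ⟨?_, hp⟩
    simp only [Finset.mem_product, hBq, hBc, hBg, Finset.mem_Icc]
    exact ⟨⟨Nat.ceil_le.2 h7, Nat.le_floor h8⟩, ⟨Nat.ceil_le.2 h9, Nat.le_floor h10⟩,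
      ⟨Nat.ceil_le.2 h11, Nat.le_floor h12⟩, ⟨Nat.ceil_le.2 h13, Nat.le_floor h14⟩,
      ⟨h5, hg1⟩, ⟨h6, hg2⟩⟩
  have step1 : (Set.ncard {p : ℕ × ℕ × ℕ × ℕ × ℕ × ℕ | cond6 Q C T M p} : ℝ) ≤ (F.card : ℝ) := by
    have := Set.ncard_le_ncard hsub F.finite_toSet
    rw [Set.ncard_coe_finset] at this
    exact_mod_cast this
  -- Step 2: fiber bound
  have fiber : ∀ a ∈ F.image Prod.snd,
      (F.filter (fun p => Prod.snd p = a)).card ≤ D + 1 := by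
    rintro ⟨q2, c1, c2, g1, g2⟩ ha
    set s := F.filter (fun p => Prod.snd p = (q2, c1, c2, g1, g2)) with hsdef
    rcases s.eq_empty_or_nonempty with hemp | hne
    · rw [hemp]; simp
    have him : (s.image Prod.fst).Nonempty := hne.image _
    set qm := (s.image Prod.fst).min' him with hqm
    obtain ⟨pm, hpm, hpmq⟩ := Finset.mem_image.1 ((s.image Prod.fst).min'_mem him)
    -- properties of pm
    have hpmF := Finset.mem_filter.1 hpm
    have hpma : pm.2 = (q2, c1, c2, g1, g2) := hpmF.2
    have hpmc : cond6 Q C T M pm := (Finset.mem_filter.1 hpmF.1).2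
    have hpmeq : pm = (qm, q2, c1, c2, g1, g2) := by
      rw [hqm, ← hpmq, ← hpma]
    rw [hpmeq] at hpmc
    obtain ⟨_, _, _, _, _, _, hQy, _, _, _, _, _, _, _, _, _, _, _, hay⟩ := hpmc
    have key : ∀ p ∈ s, Prod.fst p ∈ Finset.Icc qm (qm + D) := by
      intro p hp
      have hle : qm ≤ p.1 := Finset.min'_le _ _ (Finset.mem_image_of_mem _ hp)
      refine Finset.mem_Icc.2 ⟨hle, ?_⟩
      have hpF := Finset.mem_filter.1 hp
      have hpa : p.2 = (q2, c1, c2, g1, g2) := hpF.2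
      have hpc : cond6 Q C T M p := (Finset.mem_filter.1 hpF.1).2
      have hpeq : p = (p.1, q2, c1, c2, g1, g2) := by
        rw [← hpa]
      rw [hpeq] at hpc
      obtain ⟨_, _, _, _, _, _, hQx, _, _, _, _, _, _, _, hTn, _, _, _, hax⟩ := hpc
      -- real arithmetic
      have hyx : ((qm : ℕ):ℝ) ≤ ((p.1 : ℕ):ℝ) := by exact_mod_cast hle
      set x : ℝ := ((p.1 : ℕ) : ℝ) with hx
      set y : ℝ := ((qm : ℕ) : ℝ) with hy
      have hQx' : Q ≤ x := hQx
      have hQy' : Q ≤ y := hQy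
      have hn : T ≤ (c1:ℝ) * (g1:ℝ) := by push_cast at hTn; linarith
      have hax' := hax
      have hay' := hay
      push_cast at hax' hay'
      rw [abs_le] at hax' hay'
      have hdiff : ((c1:ℝ) * g1) * x^2 - ((c1:ℝ) * g1) * y^2 ≤ 2*M := by
        have h1 := hax'.2
        have h2 := hay'.1
        ring_nf at h1 h2 ⊢
        linarith
      have hx2y2 : y^2 ≤ x^2 := by
        apply pow_le_pow_left₀ (by linarith) hyx
      have hk1 : T * (x^2 - y^2) ≤ 2*M := by
        have h := mul_nonneg (by linarith : (0:ℝ) ≤ (c1:ℝ)*g1 - T)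
          (by linarith : (0:ℝ) ≤ x^2 - y^2)
        ring_nf at h hdiff ⊢
        linarith
      have hk2 : 2*Q*(x - y) ≤ x^2 - y^2 := by
        have h := mul_nonneg (by linarith : (0:ℝ) ≤ x - y) (by linarith : (0:ℝ) ≤ x + y - 2*Q)
        ring_nf at h ⊢
        linarith
      have hkey : x - y ≤ M / (T*Q) := by
        rw [le_div_iff₀ (by positivity)]
        have h3 := mul_le_mul_of_nonneg_left hk2 hT0.le
        ring_nf at h3 hk1 ⊢
        linarith
      have hsub' : p.1 - qm ≤ D := by
        rw [hD]
        refine Nat.le_floor ?_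
        rw [Nat.cast_sub hle]
        exact hkey
      omega
    have inj : Set.InjOn (Prod.fst : ℕ×ℕ×ℕ×ℕ×ℕ×ℕ → ℕ) (s : Set (ℕ×ℕ×ℕ×ℕ×ℕ×ℕ)) := by
      intro p hp p' hp' hpp
      have hp1 : p ∈ s := Finset.mem_coe.1 hp
      have hp1' : p' ∈ s := Finset.mem_coe.1 hp'
      have h1 : p.2 = (q2, c1, c2, g1, g2) := (Finset.mem_filter.1 hp1).2
      have h2 : p'.2 = (q2, c1, c2, g1, g2) := (Finset.mem_filter.1 hp1').2
      exact Prod.ext hpp (h1.trans h2.symm)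
    calc s.card ≤ (Finset.Icc qm (qm + D)).card := Finset.card_le_card_of_injOn _ key inj
      _ = D + 1 := by rw [Nat.card_Icc]; omega
  have step2 : F.card ≤ (D + 1) * (F.image Prod.snd).card :=
    Finset.card_le_mul_card_image F (D+1) fiber
  -- Step 3: image bound
  have step3 : ((F.image Prod.snd).card : ℝ) ≤ (2*Q) * ((6*T) * (6*T)) := by
    have hmaps : ∀ a ∈ F.image Prod.snd,
        (fun a : ℕ×ℕ×ℕ×ℕ×ℕ => (a.1, (a.2.1, a.2.2.2.1), (a.2.2.1, a.2.2.2.2))) a ∈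
          Bq ×ˢ pairBox C T ×ˢ pairBox C T := by
      rintro ⟨q2, c1, c2, g1, g2⟩ ha
      obtain ⟨p, hpF, hpa⟩ := Finset.mem_image.1 ha
      have hpc : cond6 Q C T M p := (Finset.mem_filter.1 hpF).2
      have hpeq : p = (p.1, q2, c1, c2, g1, g2) := by rw [← hpa]
      rw [hpeq] at hpc
      obtain ⟨_, _, hc1, hc2, hg1, hg2, _, _, h9, h10, h11, h12, h13, h14, h15, h16, h17, h18, _⟩ :=
        hpc
      simp only [Finset.mem_product]
      exact ⟨Finset.mem_Icc.2 ⟨Nat.ceil_le.2 h9, Nat.le_floor h10⟩,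
        mem_pairBox hc1 h11 h12 h15 h16, mem_pairBox hc2 h13 h14 h17 h18⟩
    have hinj : Set.InjOn (fun a : ℕ×ℕ×ℕ×ℕ×ℕ => (a.1, (a.2.1, a.2.2.2.1), (a.2.2.1, a.2.2.2.2)))
        ((F.image Prod.snd) : Set _) := by
      rintro ⟨a1, a2, a3, a4, a5⟩ _ ⟨b1, b2, b3, b4, b5⟩ _ h
      simp only [Prod.mk.injEq] at h
      obtain ⟨e1, ⟨e2, e3⟩, e4, e5⟩ := h
      subst e1; subst e2; subst e3; subst e4; subst e5; rfl
    have hcard := Finset.card_le_card_of_injOn _ hmaps hinj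
    calc ((F.image Prod.snd).card : ℝ)
        ≤ ((Bq ×ˢ pairBox C T ×ˢ pairBox C T).card : ℝ) := by exact_mod_cast hcard
      _ = (Bq.card : ℝ) * ((pairBox C T).card * (pairBox C T).card) := by
          rw [Finset.card_product, Finset.card_product]; push_cast; ring
      _ ≤ (2*Q) * ((6*T) * (6*T)) := by
          have hBqcard : (Bq.card : ℝ) ≤ 2*Q := by
            refine cardIcc_le _ _ (by positivity) ?_
            have f1 : (⌊2*Q⌋₊ : ℝ) ≤ 2*Q := Nat.floor_le (by positivity)
            have f2 : Q ≤ (⌈Q⌉₊ : ℝ) := Nat.le_ceil _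
            linarith
          have hP := card_pairBox_le hC hT
          have hP0 : (0:ℝ) ≤ ((pairBox C T).card : ℝ) := Nat.cast_nonneg _
          have hBq0 : (0:ℝ) ≤ (Bq.card : ℝ) := Nat.cast_nonneg _
          have hQ2 : (0:ℝ) ≤ 2*Q := by linarith
          have h6T : (0:ℝ) ≤ 6*T := by linarith
          exact mul_le_mul hBqcard (mul_le_mul hP hP hP0 h6T) (mul_nonneg hP0 hP0) hQ2
  -- combine
  have hD' : (D : ℝ) ≤ M/(T*Q) := Nat.floor_le (by positivity)
  calc (Set.ncard {p : ℕ × ℕ × ℕ × ℕ × ℕ × ℕ | cond6 Q C T M p} : ℝ)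
      ≤ (F.card : ℝ) := step1
    _ ≤ ((D:ℝ) + 1) * ((F.image Prod.snd).card : ℝ) := by exact_mod_cast step2
    _ ≤ (M/(T*Q) + 1) * ((2*Q) * ((6*T) * (6*T))) := by
        have h0 : (0:ℝ) ≤ ((F.image Prod.snd).card : ℝ) := Nat.cast_nonneg _
        have hD1 : (D:ℝ) + 1 ≤ M/(T*Q) + 1 := by linarith
        have hD10 : (0:ℝ) ≤ (D:ℝ) + 1 := by positivity
        exact mul_le_mul hD1 step3 h0 (by positivity)
    _ = 72 * (T^2 * Q * (1 + M/(T*Q))) := by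
        field_simp
        ring
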